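/- arXiv:2605.15240 — 6 statements merged into one kernel-verified Lean document; each statement's English description precedes it below -/
import Mathlib

section
/- (Corollary: larger eigenvalues give smaller reconstruction error.) Let K = Σ_{i=1}^n d_i u_i u_iᵀ and K' = Σ_{i=1}^n d_i' u_i u_iᵀ be two symmetric positive semidefinite matrices with the same orthonormal eigenvectors u_1, …, u_n and eigenvalues satisfying 0 ≤ d_i ≤ d_i' for all i. Then for every y ∈ ℝⁿ and z > 0, the reconstruction error of K' is at most that of K: ‖y − K' (K' + zI)⁻¹ y‖² ≤ ‖y − K (K + zI)⁻¹ y‖². -/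
/-!
Let `U` be the matrix with rows `u i`; it is orthogonal and `K = Uᵀ diag(d) U`. Hence
`y - K (K + zI)⁻¹ y = Uᵀ diag(z / (d i + z)) U y`, whose squared norm is
`∑ i, (z / (d i + z))² ⟨u i, y⟩²`, and every coefficient `z / (d i + z)` decreases in `d i`.
-/

open Matrix

namespace Matrix

variable {ι R 𝕜 : Type*} [Fintype ι] [DecidableEq ι]

theorem sum_smul_vecMulVec_self [CommSemiring R] (u : ι → ι → R) (f : ι → R) :
    ∑ i, f i • vecMulVec (u i) (u i) = (of u)ᵀ * diagonal f * of u := by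
  ext j k
  simp only [sum_apply, smul_apply, vecMulVec_apply, mul_apply, transpose_apply, of_apply,
    diagonal_apply, mul_ite, mul_zero, Finset.sum_ite_eq', Finset.mem_univ, if_true, smul_eq_mul]
  exact Finset.sum_congr rfl fun i _ => by ring

theorem of_mul_transpose_eq_one [Semiring R] {u : ι → ι → R}
    (hu : ∀ i j, u i ⬝ᵥ u j = if i = j then 1 else 0) : of u * (of u)ᵀ = 1 := by
  ext i j
  rw [mul_apply', one_apply]
  exact hu i j

theorem inv_diagonal_of_ne_zero [Field 𝕜] {g : ι → 𝕜} (hg : ∀ i, g i ≠ 0) :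
    (diagonal g)⁻¹ = diagonal g⁻¹ := by
  refine inv_eq_left_inv ?_
  rw [diagonal_mul_diagonal, ← diagonal_one]
  exact congrArg diagonal (funext fun i => inv_mul_cancel₀ (hg i))

theorem diagonal_mulVec_dotProduct_self [CommSemiring R] (g c : ι → R) :
    (diagonal g *ᵥ c) ⬝ᵥ (diagonal g *ᵥ c) = ∑ i, g i ^ 2 * c i ^ 2 := by
  simp only [dotProduct, mulVec_diagonal]
  exact Finset.sum_congr rfl fun i _ => by ring

section Orthogonal

variable [CommRing R] {U : Matrix ι ι R}

theorem transpose_mulVec_dotProduct_self (hU : U * Uᵀ = 1) (w : ι → R) :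
    (Uᵀ *ᵥ w) ⬝ᵥ (Uᵀ *ᵥ w) = w ⬝ᵥ w := by
  rw [dotProduct_mulVec, vecMul_transpose, mulVec_mulVec, hU, one_mulVec]

theorem inv_transpose_mul_mul (hU : U * Uᵀ = 1) (A : Matrix ι ι R) :
    (Uᵀ * A * U)⁻¹ = Uᵀ * A⁻¹ * U := by
  rw [mul_inv_rev, mul_inv_rev, inv_eq_left_inv (mul_eq_one_comm.mp hU), inv_eq_left_inv hU,
    Matrix.mul_assoc]

theorem transpose_mul_mul_mul_transpose_mul_mul (hU : U * Uᵀ = 1) (A B : Matrix ι ι R) :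
    Uᵀ * A * U * (Uᵀ * B * U) = Uᵀ * (A * B) * U := by
  simp only [Matrix.mul_assoc, ← Matrix.mul_assoc U, hU, Matrix.one_mul]

theorem transpose_mul_one_mul (hU : U * Uᵀ = 1) : Uᵀ * 1 * U = 1 := by
  rw [Matrix.mul_one, mul_eq_one_comm.mp hU]

end Orthogonal

theorem sub_mul_inv_add_smul_one_mulVec [Field 𝕜] {U : Matrix ι ι 𝕜} (hU : U * Uᵀ = 1)
    (f : ι → 𝕜) {z : 𝕜} (hfz : ∀ i, f i + z ≠ 0) (y : ι → 𝕜) :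
    y - (Uᵀ * diagonal f * U * (Uᵀ * diagonal f * U + z • 1)⁻¹) *ᵥ y
      = Uᵀ *ᵥ (diagonal (fun i => z / (f i + z)) *ᵥ (U *ᵥ y)) := by
  have hshift : Uᵀ * diagonal f * U + z • 1 = Uᵀ * (diagonal f + z • 1) * U := by
    rw [Matrix.mul_add, Matrix.add_mul, Matrix.mul_smul, Matrix.smul_mul, transpose_mul_one_mul hU]
  have hone_sub :
      1 - diagonal f * diagonal (fun i => f i + z)⁻¹ = diagonal fun i => z / (f i + z) := by
    rw [diagonal_mul_diagonal, ← diagonal_one, diagonal_sub]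
    refine congrArg diagonal (funext fun i => ?_)
    simp only [Pi.inv_apply]
    field_simp [hfz i]
    ring
  rw [hshift, smul_one_eq_diagonal, diagonal_add, inv_transpose_mul_mul hU,
    transpose_mul_mul_mul_transpose_mul_mul hU, inv_diagonal_of_ne_zero hfz, ← hone_sub,
    mulVec_mulVec, mulVec_mulVec, Matrix.mul_sub, Matrix.sub_mul, Matrix.mul_one,
    mul_eq_one_comm.mp hU, sub_mulVec, one_mulVec]

end Matrix

theorem krr_larger_eigenvalues_smaller_reconstruction_error_general
    (n : ℕ)
    (K K' : Matrix (Fin n) (Fin n) ℝ)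
    (d d' : Fin n → ℝ) (hdd' : ∀ i, 0 ≤ d i ∧ d i ≤ d' i)
    (u : Fin n → (Fin n → ℝ))
    (hu : ∀ i j, u i ⬝ᵥ u j = if i = j then (1 : ℝ) else 0)
    (hKdecomp : K = ∑ i, d i • vecMulVec (u i) (u i))
    (hK'decomp : K' = ∑ i, d' i • vecMulVec (u i) (u i))
    (y : Fin n → ℝ) (z : ℝ) (hz : 0 < z) :
    (y - (K' * (K' + z • (1 : Matrix (Fin n) (Fin n) ℝ))⁻¹).mulVec y) ⬝ᵥ
        (y - (K' * (K' + z • (1 : Matrix (Fin n) (Fin n) ℝ))⁻¹).mulVec y)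
      ≤ (y - (K * (K + z • (1 : Matrix (Fin n) (Fin n) ℝ))⁻¹).mulVec y) ⬝ᵥ
        (y - (K * (K + z • (1 : Matrix (Fin n) (Fin n) ℝ))⁻¹).mulVec y) := by
  have hU := of_mul_transpose_eq_one hu
  have hpos (i) : 0 < d i + z := by linarith [(hdd' i).1]
  have hpos' (i) : 0 < d' i + z := by linarith [(hdd' i).1, (hdd' i).2]
  subst hKdecomp hK'decomp
  rw [sum_smul_vecMulVec_self, sum_smul_vecMulVec_self,
    sub_mul_inv_add_smul_one_mulVec hU d fun i => (hpos i).ne',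
    sub_mul_inv_add_smul_one_mulVec hU d' fun i => (hpos' i).ne',
    transpose_mulVec_dotProduct_self hU, transpose_mulVec_dotProduct_self hU,
    diagonal_mulVec_dotProduct_self, diagonal_mulVec_dotProduct_self]
  gcongr with i
  exacts [div_nonneg hz.le (hpos' i).le, hpos i, (hdd' i).2]

/-- Corollary, larger eigenvalues give smaller reconstruction error:
Let `K = ∑ i, d i • u i u iᵀ` and `K' = ∑ i, d' i • u i u iᵀ` be two symmetric positive
semidefinite matrices with the same orthonormal eigenvectors `u i` and eigenvalues satisfying
`0 ≤ d i ≤ d' i` for all `i`. Then for every `y` and `z > 0`, the reconstruction error of `K'`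
is at most that of `K`: `‖y − K' (K' + zI)⁻¹ y‖² ≤ ‖y − K (K + zI)⁻¹ y‖²`, where the squared
Euclidean norm `‖v‖²` is written as `v ⬝ᵥ v`. -/
theorem krr_larger_eigenvalues_smaller_reconstruction_error
    (n : ℕ) (hn : 0 < n)
    (K K' : Matrix (Fin n) (Fin n) ℝ)
    (d d' : Fin n → ℝ) (hdd' : ∀ i, 0 ≤ d i ∧ d i ≤ d' i)
    (u : Fin n → (Fin n → ℝ))
    (hu : ∀ i j, u i ⬝ᵥ u j = if i = j then (1 : ℝ) else 0)
    (hKdecomp : K = ∑ i, d i • vecMulVec (u i) (u i))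
    (hK'decomp : K' = ∑ i, d' i • vecMulVec (u i) (u i))
    (y : Fin n → ℝ) (z : ℝ) (hz : 0 < z) :
    (y - (K' * (K' + z • (1 : Matrix (Fin n) (Fin n) ℝ))⁻¹).mulVec y) ⬝ᵥ
        (y - (K' * (K' + z • (1 : Matrix (Fin n) (Fin n) ℝ))⁻¹).mulVec y)
      ≤ (y - (K * (K + z • (1 : Matrix (Fin n) (Fin n) ℝ))⁻¹).mulVec y) ⬝ᵥ
        (y - (K * (K + z • (1 : Matrix (Fin n) (Fin n) ℝ))⁻¹).mulVec y) :=
  krr_larger_eigenvalues_smaller_reconstruction_error_general n K K' d d' hdd' u hu hKdecomp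
    hK'decomp y z hz
end

section
/- (Davis–Kahan sin-θ bound.) Let X and E be n×n real symmetric matrices and X̃ = X + E. Let λ_1 ≥ … ≥ λ_n be the eigenvalues of X with corresponding orthonormal eigenvectors u_1, …, u_n, and λ̃_1 ≥ … ≥ λ̃_n the eigenvalues of X̃ with corresponding orthonormal eigenvectors ũ_1, …, ũ_n. Fix an index t and set δ_t := min { |λ̃_j − λ_t| : j ≠ t }. If δ_t > 0, then √(1 − ⟨u_t, ũ_t⟩²) ≤ ‖E‖ / δ_t. -/
open Matrix
open scoped Matrix.Norms.L2Operator

/-- Davis–Kahan sin-θ bound: Let `X` and `E` be `n × n` real symmetric matrices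
and `X̃ = X + E`. Let `lam 1 ≥ … ≥ lam n` be the eigenvalues of `X` with orthonormal
eigenvectors `u i`, and `lamt 1 ≥ … ≥ lamt n` the eigenvalues of `X̃` with orthonormal
eigenvectors `ut i`. Fix `t` and let `δ` be `min {|lamt j − lam t| : j ≠ t}` (expressed as a
positive lower bound on all these gaps). Then `√(1 − ⟨u t, ut t⟩²) ≤ ‖E‖ / δ`, where `‖E‖`
is the ℓ²→ℓ² operator norm. -/
theorem davis_kahan_sin_theta
    (n : ℕ) (hn : 0 < n)
    (X E : Matrix (Fin n) (Fin n) ℝ) (hX : X.IsSymm) (hE : E.IsSymm)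
    (lam lamt : Fin n → ℝ) (hlam : Antitone lam) (hlamt : Antitone lamt)
    (u ut : Fin n → (Fin n → ℝ))
    (hu : ∀ i j, u i ⬝ᵥ u j = if i = j then (1 : ℝ) else 0)
    (hut : ∀ i j, ut i ⬝ᵥ ut j = if i = j then (1 : ℝ) else 0)
    (heig : ∀ i, X.mulVec (u i) = lam i • u i)
    (heigt : ∀ i, (X + E).mulVec (ut i) = lamt i • ut i)
    (t : Fin n) (δ : ℝ) (hδpos : 0 < δ)
    (hδ : ∀ j, j ≠ t → δ ≤ |lamt j - lam t|) :
    Real.sqrt (1 - (u t ⬝ᵥ ut t) ^ 2) ≤ ‖E‖ / δ := by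
  classical
  set w : Fin n → ℝ := E.mulVec (u t) with hw
  set c : Fin n → ℝ := fun j => u t ⬝ᵥ ut j with hc
  -- Completeness / Parseval via the orthogonal matrix with rows `ut j`
  set U : Matrix (Fin n) (Fin n) ℝ := Matrix.of (fun i j => ut i j) with hU
  have hUUT : U * Uᵀ = 1 := by
    ext i j
    simpa [hU, Matrix.mul_apply, Matrix.one_apply, dotProduct] using hut i j
  have hUTU : Uᵀ * U = 1 := mul_eq_one_comm.mp hUUT
  have parseval : ∀ v : Fin n → ℝ, ∑ j, (ut j ⬝ᵥ v) ^ 2 = v ⬝ᵥ v := by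
    intro v
    have h1 : ∑ j, (ut j ⬝ᵥ v) ^ 2 = (U.mulVec v) ⬝ᵥ (U.mulVec v) := by
      simp [hU, Matrix.mulVec, dotProduct, sq]
    rw [h1, Matrix.dotProduct_mulVec, ← Matrix.mulVec_transpose,
      Matrix.mulVec_mulVec, hUTU, Matrix.one_mulVec]
  -- the key identity for the coefficients of `w`
  have hsymm : (X + E).IsSymm := hX.add hE
  have hA : ∀ j, ut j ⬝ᵥ w = (lamt j - lam t) * c j := by
    intro j
    have h1 : ut j ⬝ᵥ (X + E).mulVec (u t) = lamt j * (ut j ⬝ᵥ u t) := by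
      rw [Matrix.dotProduct_mulVec, ← Matrix.mulVec_transpose, hsymm.eq, heigt j]
      simp [smul_dotProduct]
    have h2 : ut j ⬝ᵥ X.mulVec (u t) = lam t * (ut j ⬝ᵥ u t) := by
      rw [heig t]
      simp [dotProduct_smul]
    have h3 : ut j ⬝ᵥ w = ut j ⬝ᵥ (X + E).mulVec (u t) - ut j ⬝ᵥ X.mulVec (u t) := by
      rw [hw]
      have : E.mulVec (u t) = (X + E).mulVec (u t) - X.mulVec (u t) := by
        rw [Matrix.add_mulVec]; abel
      rw [this, dotProduct_sub]
    rw [h3, h1, h2, dotProduct_comm (ut j) (u t)]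
    ring
  -- sum of squared coefficients of `u t` is 1
  have hcsum : ∑ j, (c j) ^ 2 = 1 := by
    have := parseval (u t)
    simp only [hc] at *
    have hrw : ∀ j, ut j ⬝ᵥ u t = u t ⬝ᵥ ut j := fun j => dotProduct_comm _ _
    simp only [hrw] at this
    rw [this]
    simpa using hu t t
  have hct : (c t) ^ 2 ≤ 1 := by
    rw [← hcsum]
    exact Finset.single_le_sum (f := fun j => (c j) ^ 2) (fun j _ => sq_nonneg _)
      (Finset.mem_univ t)
  -- lower bound: δ² (1 - c t²) ≤ ‖w‖²
  have hww : ∑ j, (ut j ⬝ᵥ w) ^ 2 = w ⬝ᵥ w := parseval w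
  have hlow : δ ^ 2 * (1 - (c t) ^ 2) ≤ w ⬝ᵥ w := by
    rw [← hww]
    have h1 : δ ^ 2 * (1 - (c t) ^ 2) = ∑ j ∈ Finset.univ.erase t, δ ^ 2 * (c j) ^ 2 := by
      rw [← Finset.mul_sum]
      congr 1
      rw [← hcsum, ← Finset.add_sum_erase _ _ (Finset.mem_univ t)]
      ring
    rw [h1]
    have h2 : ∀ j ∈ Finset.univ.erase t, δ ^ 2 * (c j) ^ 2 ≤ (ut j ⬝ᵥ w) ^ 2 := by
      intro j hj
      rw [hA j, mul_pow]
      have hjt : j ≠ t := Finset.ne_of_mem_erase hj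
      have hd := hδ j hjt
      have : δ ^ 2 ≤ (lamt j - lam t) ^ 2 := by
        rw [← sq_abs (lamt j - lam t)]
        exact pow_le_pow_left₀ hδpos.le hd 2
      exact mul_le_mul_of_nonneg_right this (sq_nonneg _)
    calc ∑ j ∈ Finset.univ.erase t, δ ^ 2 * (c j) ^ 2
        ≤ ∑ j ∈ Finset.univ.erase t, (ut j ⬝ᵥ w) ^ 2 := Finset.sum_le_sum h2
      _ ≤ ∑ j, (ut j ⬝ᵥ w) ^ 2 :=
          Finset.sum_le_sum_of_subset_of_nonneg (Finset.subset_univ _)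
            (fun j _ _ => sq_nonneg _)
  -- upper bound: ‖w‖² ≤ ‖E‖²
  have hupper : w ⬝ᵥ w ≤ ‖E‖ ^ 2 := by
    set x : EuclideanSpace ℝ (Fin n) := (EuclideanSpace.equiv (Fin n) ℝ).symm (u t) with hx
    have hnx : ‖x‖ = 1 := by
      rw [EuclideanSpace.norm_eq]
      have : ∑ i, ‖u t i‖ ^ 2 = 1 := by
        have h1 : u t ⬝ᵥ u t = 1 := by simpa using hu t t
        rw [← h1]
        simp [dotProduct, sq, Real.norm_eq_abs, abs_mul_abs_self]
      rw [show (fun i => ‖x i‖ ^ 2) = fun i => ‖u t i‖ ^ 2 from rfl] at *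
      rw [this, Real.sqrt_one]
    have hmv := E.l2_opNorm_mulVec x
    rw [hnx, mul_one] at hmv
    have hwn : ‖(EuclideanSpace.equiv (Fin n) ℝ).symm (E *ᵥ x)‖ ^ 2 = w ⬝ᵥ w := by
      rw [EuclideanSpace.norm_eq, Real.sq_sqrt (Finset.sum_nonneg fun i _ => sq_nonneg _)]
      simp only [hw, dotProduct, sq, Real.norm_eq_abs, abs_mul_abs_self]
      rfl
    rw [← hwn]
    exact pow_le_pow_left₀ (norm_nonneg _) hmv 2
  -- conclude
  have hkey : δ ^ 2 * (1 - (c t) ^ 2) ≤ ‖E‖ ^ 2 := le_trans hlow hupper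
  rw [le_div_iff₀ hδpos]
  have h1 : Real.sqrt (1 - (c t) ^ 2) * δ = Real.sqrt (δ ^ 2 * (1 - (c t) ^ 2)) := by
    rw [Real.sqrt_mul (sq_nonneg δ), Real.sqrt_sq hδpos.le, mul_comm]
  rw [show (u t ⬝ᵥ ut t) = c t from rfl, h1]
  calc Real.sqrt (δ ^ 2 * (1 - (c t) ^ 2)) ≤ Real.sqrt (‖E‖ ^ 2) := Real.sqrt_le_sqrt hkey
    _ = ‖E‖ := Real.sqrt_sq (norm_nonneg _)
end

section
/- (Lemma of Loukas, eigenvector cross-alignment bound.) Let K and K̃ = K + ΔK be n×n real symmetric matrices. Let (d_i, u_i) be an eigenpair of K with u_i a unit vector, let d_j be another eigenvalue of K with d_j ≠ d_i, and let (d̃_j, ũ_j) be an eigenpair of K̃ with ũ_j a unit vector. If |d̃_j − d_i| ≥ |d_j − d_i| / 2, then |⟨u_i, ũ_j⟩| ≤ 2 ‖ΔK‖ / |d_i − d_j|. -/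
open Matrix
open scoped Matrix.Norms.L2Operator

lemma dot_eq_inner' (n : ℕ) (a b : Fin n → ℝ) :
    a ⬝ᵥ b = @inner ℝ (EuclideanSpace ℝ (Fin n)) _
      ((EuclideanSpace.equiv (Fin n) ℝ).symm a) ((EuclideanSpace.equiv (Fin n) ℝ).symm b) := by
  simp [PiLp.inner_apply, dotProduct, mul_comm]

lemma norm_eq_one_of_dot (n : ℕ) (a : Fin n → ℝ) (h : a ⬝ᵥ a = 1) :
    ‖(EuclideanSpace.equiv (Fin n) ℝ).symm a‖ = 1 := by
  have := dot_eq_inner' n a a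
  rw [h, real_inner_self_eq_norm_sq] at this
  nlinarith [norm_nonneg ((EuclideanSpace.equiv (Fin n) ℝ).symm a)]

/-- Lemma of Loukas, eigenvector cross-alignment bound: Let `K` and
`K̃ = K + ΔK` be `n × n` real symmetric matrices. Let `(d i, u i)` be an eigenpair of `K`
with `u i` a unit vector, let `d j` be another eigenvalue of `K` (with unit eigenvector `u j`)
satisfying `d j ≠ d i`, and let `(dt j, ut j)` be an eigenpair of `K̃` with `ut j` a unit
vector. If `|dt j − d i| ≥ |d j − d i| / 2`, then `|⟨u i, ut j⟩| ≤ 2 ‖ΔK‖ / |d i − d j|`,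
where `‖·‖` is the ℓ²→ℓ² operator norm. -/
theorem loukas_cross_alignment_bound
    (n : ℕ) (hn : 0 < n)
    (K ΔK : Matrix (Fin n) (Fin n) ℝ) (hK : K.IsSymm) (hKt : (K + ΔK).IsSymm)
    (di dj dtj : ℝ) (ui uj utj : Fin n → ℝ)
    (hui : ui ⬝ᵥ ui = 1) (huj : uj ⬝ᵥ uj = 1) (hutj : utj ⬝ᵥ utj = 1)
    (heigi : K.mulVec ui = di • ui)
    (heigj : K.mulVec uj = dj • uj)
    (hne : dj ≠ di)
    (heigtj : (K + ΔK).mulVec utj = dtj • utj)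
    (hgap : |dtj - di| ≥ |dj - di| / 2) :
    |ui ⬝ᵥ utj| ≤ 2 * ‖ΔK‖ / |di - dj| := by
  have h1 : ui ⬝ᵥ (K + ΔK).mulVec utj = dtj * (ui ⬝ᵥ utj) := by
    rw [heigtj, dotProduct_smul, smul_eq_mul]
  have h2 : ui ⬝ᵥ K.mulVec utj = di * (ui ⬝ᵥ utj) := by
    rw [dotProduct_mulVec, ← Matrix.mulVec_transpose, hK, heigi, smul_dotProduct, smul_eq_mul]
  have h3 : ui ⬝ᵥ ΔK.mulVec utj = (dtj - di) * (ui ⬝ᵥ utj) := by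
    have : ui ⬝ᵥ (K + ΔK).mulVec utj = ui ⬝ᵥ K.mulVec utj + ui ⬝ᵥ ΔK.mulVec utj := by
      rw [Matrix.add_mulVec, dotProduct_add]
    rw [h1, h2] at this
    linarith
  have hbound : |ui ⬝ᵥ ΔK.mulVec utj| ≤ ‖ΔK‖ := by
    rw [dot_eq_inner' n ui (ΔK.mulVec utj)]
    calc _ ≤ ‖(EuclideanSpace.equiv (Fin n) ℝ).symm ui‖ *
            ‖(EuclideanSpace.equiv (Fin n) ℝ).symm (ΔK.mulVec utj)‖ :=
          abs_real_inner_le_norm _ _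
      _ ≤ 1 * (‖ΔK‖ * 1) := by
          apply mul_le_mul
          · exact le_of_eq (norm_eq_one_of_dot n ui hui)
          · have := ΔK.l2_opNorm_mulVec ((EuclideanSpace.equiv (Fin n) ℝ).symm utj)
            rwa [norm_eq_one_of_dot n utj hutj] at this
          · exact norm_nonneg _
          · exact zero_le_one
      _ = ‖ΔK‖ := by ring
  have hgap0 : (0 : ℝ) < |dj - di| / 2 := by
    have : dj - di ≠ 0 := sub_ne_zero.mpr hne
    positivity
  have hdtj : (0 : ℝ) < |dtj - di| := lt_of_lt_of_le hgap0 hgap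
  have key : |dtj - di| * |ui ⬝ᵥ utj| ≤ ‖ΔK‖ := by
    rw [← abs_mul, ← h3]; exact hbound
  have h4 : |ui ⬝ᵥ utj| ≤ ‖ΔK‖ / |dtj - di| := by
    rw [le_div_iff₀ hdtj]; linarith [key]
  have h5 : ‖ΔK‖ / |dtj - di| ≤ ‖ΔK‖ / (|dj - di| / 2) :=
    div_le_div_of_nonneg_left (norm_nonneg _) hgap0 hgap
  have : |di - dj| = |dj - di| := abs_sub_comm _ _
  calc |ui ⬝ᵥ utj| ≤ ‖ΔK‖ / (|dj - di| / 2) := le_trans h4 h5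
    _ = 2 * ‖ΔK‖ / |di - dj| := by rw [this]; field_simp
end

section
/- (Alignment lower bound Θ_i.) Let K* and K = K* + ΔK be n×n real symmetric matrices with eigenvalues d_1* ≥ … ≥ d_n* and d_1 ≥ … ≥ d_n respectively, and corresponding orthonormal eigenvectors u_1*, …, u_n* and u_1, …, u_n. Fix an index i and set δ_i := min { |d_k − d_i*| : k ≠ i }. If δ_i > 0 and ‖ΔK‖ < δ_i, then |⟨u_i, u_i*⟩| ≥ √(1 − (‖ΔK‖/δ_i)²). -/
open Matrix
open scoped Matrix.Norms.L2Operator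

lemma parseval_aux (n : ℕ) (u : Fin n → (Fin n → ℝ))
    (hu : ∀ i j, u i ⬝ᵥ u j = if i = j then (1 : ℝ) else 0) (x : Fin n → ℝ) :
    ∑ k, (u k ⬝ᵥ x) ^ 2 = x ⬝ᵥ x := by
  set U : Matrix (Fin n) (Fin n) ℝ := Matrix.of u with hU
  have h1 : U * Uᵀ = 1 := by
    ext k l
    simp [Matrix.mul_apply, Matrix.one_apply, hU, ← hu k l, dotProduct]
  have h2 : Uᵀ * U = 1 := mul_eq_one_comm.mp h1
  have hmv : ∀ k, (U *ᵥ x) k = u k ⬝ᵥ x := fun k => rfl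
  calc ∑ k, (u k ⬝ᵥ x) ^ 2 = (U *ᵥ x) ⬝ᵥ (U *ᵥ x) := by
        simp [dotProduct, hmv, sq]
    _ = x ⬝ᵥ x := by
        rw [Matrix.dotProduct_mulVec, ← Matrix.mulVec_transpose, Matrix.mulVec_mulVec, h2,
          Matrix.one_mulVec]

/-- Alignment lower bound Θ_i: Let `K*` and `K = K* + ΔK` be `n × n` real
symmetric matrices with eigenvalues `ds 1 ≥ … ≥ ds n` and `d 1 ≥ … ≥ d n` and corresponding
orthonormal eigenvectors `us i` and `u i`. Fix `i` and let `δ` be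
`min {|d k − ds i| : k ≠ i}` (expressed as a positive lower bound on all these gaps). If
`δ > 0` and `‖ΔK‖ < δ`, then `|⟨u i, us i⟩| ≥ √(1 − (‖ΔK‖/δ)²)`, where `‖·‖` is the ℓ²→ℓ²
operator norm. -/
theorem alignment_lower_bound_Theta
    (n : ℕ) (hn : 0 < n)
    (Ks ΔK : Matrix (Fin n) (Fin n) ℝ) (hKs : Ks.IsSymm) (hK : (Ks + ΔK).IsSymm)
    (ds d : Fin n → ℝ) (hds : Antitone ds) (hd : Antitone d)
    (us u : Fin n → (Fin n → ℝ))
    (hus : ∀ i j, us i ⬝ᵥ us j = if i = j then (1 : ℝ) else 0)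
    (hu : ∀ i j, u i ⬝ᵥ u j = if i = j then (1 : ℝ) else 0)
    (heigs : ∀ i, Ks.mulVec (us i) = ds i • us i)
    (heig : ∀ i, (Ks + ΔK).mulVec (u i) = d i • u i)
    (i : Fin n) (δ : ℝ) (hδpos : 0 < δ)
    (hδ : ∀ k, k ≠ i → δ ≤ |d k - ds i|)
    (hΔK : ‖ΔK‖ < δ) :
    |u i ⬝ᵥ us i| ≥ Real.sqrt (1 - (‖ΔK‖ / δ) ^ 2) := by
  set v : Fin n → ℝ := us i with hv
  set w : Fin n → ℝ := ΔK *ᵥ v with hw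
  set c : Fin n → ℝ := fun k => u k ⬝ᵥ v with hc
  have hvv : v ⬝ᵥ v = 1 := by rw [hv, hus i i]; simp
  -- Parseval for v
  have Pv : ∑ k, c k ^ 2 = 1 := by
    rw [hc]; simp only []; rw [parseval_aux n u hu v, hvv]
  -- key identity: u k ⬝ᵥ w = (d k - ds i) * c k
  have hkey : ∀ k, u k ⬝ᵥ w = (d k - ds i) * c k := by
    intro k
    have hKv : w = (Ks + ΔK) *ᵥ v - ds i • v := by
      rw [Matrix.add_mulVec, heigs i, hw, hv]; ring_nf
    have h1 : u k ⬝ᵥ ((Ks + ΔK) *ᵥ v) = d k * c k := by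
      rw [Matrix.dotProduct_mulVec, ← Matrix.mulVec_transpose, hK, heig k,
        smul_dotProduct]
      rfl
    rw [hKv, dotProduct_sub, h1, dotProduct_smul]
    simp only [smul_eq_mul]
    ring_nf
    simp only [hc]; ring
  -- Parseval for w
  have Pw : ∑ k, ((d k - ds i) * c k) ^ 2 = w ⬝ᵥ w := by
    rw [← parseval_aux n u hu w]
    exact Finset.sum_congr rfl fun k _ => by rw [hkey k]
  -- lower bound on w ⬝ᵥ w
  have hlow : δ ^ 2 * (1 - c i ^ 2) ≤ w ⬝ᵥ w := by
    have h1 : ∑ k ∈ Finset.univ.erase i, c k ^ 2 = 1 - c i ^ 2 := by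
      rw [← Finset.sum_erase_add Finset.univ _ (Finset.mem_univ i)] at Pv
      linarith
    calc δ ^ 2 * (1 - c i ^ 2) = ∑ k ∈ Finset.univ.erase i, δ ^ 2 * c k ^ 2 := by
          rw [← Finset.mul_sum, h1]
      _ ≤ ∑ k ∈ Finset.univ.erase i, ((d k - ds i) * c k) ^ 2 := by
          apply Finset.sum_le_sum
          intro k hk
          have hki : k ≠ i := Finset.ne_of_mem_erase hk
          have := hδ k hki
          rw [mul_pow]
          apply mul_le_mul_of_nonneg_right _ (sq_nonneg _)
          calc δ ^ 2 ≤ |d k - ds i| ^ 2 := by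
                apply pow_le_pow_left₀ hδpos.le this
            _ = (d k - ds i) ^ 2 := sq_abs _
      _ ≤ ∑ k, ((d k - ds i) * c k) ^ 2 :=
          Finset.sum_le_sum_of_subset_of_nonneg (Finset.erase_subset _ _)
            (fun k _ _ => sq_nonneg _)
      _ = w ⬝ᵥ w := Pw
  -- upper bound on w ⬝ᵥ w via operator norm
  have hup : w ⬝ᵥ w ≤ ‖ΔK‖ ^ 2 := by
    have hx : ∀ (x : Fin n → ℝ),
        ‖(EuclideanSpace.equiv (Fin n) ℝ).symm x‖ ^ 2 = x ⬝ᵥ x := by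
      intro x
      rw [EuclideanSpace.norm_eq, Real.sq_sqrt (by positivity)]
      simp [dotProduct, sq]
    have hnv : ‖(EuclideanSpace.equiv (Fin n) ℝ).symm v‖ = 1 := by
      have := hx v
      rw [hvv] at this
      nlinarith [norm_nonneg ((EuclideanSpace.equiv (Fin n) ℝ).symm v)]
    have hb := ΔK.l2_opNorm_mulVec ((EuclideanSpace.equiv (Fin n) ℝ).symm v)
    rw [hnv, mul_one] at hb
    have hbw : ‖(EuclideanSpace.equiv (Fin n) ℝ).symm w‖ ≤ ‖ΔK‖ := hb
    calc w ⬝ᵥ w = ‖(EuclideanSpace.equiv (Fin n) ℝ).symm w‖ ^ 2 := (hx w).symm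
      _ ≤ ‖ΔK‖ ^ 2 := by
          apply pow_le_pow_left₀ (norm_nonneg _) hbw
  -- conclude
  have hci : 1 - (‖ΔK‖ / δ) ^ 2 ≤ c i ^ 2 := by
    have h2 : δ ^ 2 * (1 - c i ^ 2) ≤ ‖ΔK‖ ^ 2 := le_trans hlow hup
    have hδ2 : (0 : ℝ) < δ ^ 2 := by positivity
    have h3 : 1 - c i ^ 2 ≤ ‖ΔK‖ ^ 2 / δ ^ 2 := by
      rw [le_div_iff₀ hδ2]; nlinarith
    rw [div_pow]; linarith
  calc Real.sqrt (1 - (‖ΔK‖ / δ) ^ 2) ≤ Real.sqrt (c i ^ 2) := Real.sqrt_le_sqrt hci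
    _ = |c i| := Real.sqrt_sq_eq_abs _
end

section
/- (Per-eigenvector coefficient perturbation bound.) Let K* and K = K* + ΔK be n×n real symmetric positive semidefinite matrices with eigenvalues d_1*, …, d_n* and d_1, …, d_n and corresponding orthonormal eigenvectors u_1*, …, u_n* and u_1, …, u_n; let z > 0 and y ∈ ℝⁿ. Fix an index i and assume: (a) |d_i − d_i*| ≤ ‖ΔK‖; (b) there is Θ_i ∈ [0, 1] with ⟨u_i, u_i*⟩ ≥ Θ_i; (c) for every k ≠ i, d_k* ≠ d_i* and |⟨u_i, u_k*⟩| ≤ 2 ‖ΔK‖ / |d_i* − d_k*|. Then |⟨u_i, y⟩/(d_i + z) − ⟨u_i*, y⟩/(d_i* + z)| ≤ (1/(d_i + z)) · ( Σ_{k ≠ i} (2 ‖ΔK‖ / |d_i* − d_k*|) |⟨u_k*, y⟩| + |⟨u_i*, y⟩| (1 − Θ_i) + ‖ΔK‖ |⟨u_i*, y⟩| / (d_i* + z) ). -/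
open Matrix
open scoped Matrix.Norms.L2Operator

/-- Per-eigenvector coefficient perturbation bound: Let `K*` and
`K = K* + ΔK` be `n × n` real symmetric positive semidefinite matrices with eigenvalues
`ds i` and `d i` and corresponding orthonormal eigenvectors `us i` and `u i`; let `z > 0` and
`y ∈ ℝⁿ`. Fix `i` and assume (a) `|d i − ds i| ≤ ‖ΔK‖`; (b) there is `Θ i ∈ [0,1]` with
`⟨u i, us i⟩ ≥ Θ i`; (c) for every `k ≠ i`, `ds k ≠ ds i` and
`|⟨u i, us k⟩| ≤ 2 ‖ΔK‖ / |ds i − ds k|`. Then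
`|⟨u i, y⟩/(d i + z) − ⟨us i, y⟩/(ds i + z)| ≤ (1/(d i + z)) · (∑_{k ≠ i} (2‖ΔK‖/|ds i − ds k|)
|⟨us k, y⟩| + |⟨us i, y⟩| (1 − Θ i) + ‖ΔK‖ |⟨us i, y⟩| / (ds i + z))`. -/
theorem per_eigenvector_coefficient_perturbation_bound
    (n : ℕ) (hn : 0 < n)
    (Ks ΔK : Matrix (Fin n) (Fin n) ℝ)
    (hKs : Ks.PosSemidef) (hK : (Ks + ΔK).PosSemidef)
    (ds d : Fin n → ℝ)
    (us u : Fin n → (Fin n → ℝ))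
    (hus : ∀ i j, us i ⬝ᵥ us j = if i = j then (1 : ℝ) else 0)
    (hu : ∀ i j, u i ⬝ᵥ u j = if i = j then (1 : ℝ) else 0)
    (heigs : ∀ i, Ks.mulVec (us i) = ds i • us i)
    (heig : ∀ i, (Ks + ΔK).mulVec (u i) = d i • u i)
    (z : ℝ) (hz : 0 < z) (y : Fin n → ℝ)
    (i : Fin n)
    (ha : |d i - ds i| ≤ ‖ΔK‖)
    (Θi : ℝ) (hΘ0 : 0 ≤ Θi) (hΘ1 : Θi ≤ 1) (hΘ : u i ⬝ᵥ us i ≥ Θi)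
    (hc : ∀ k, k ≠ i → ds k ≠ ds i ∧ |u i ⬝ᵥ us k| ≤ 2 * ‖ΔK‖ / |ds i - ds k|) :
    |(u i ⬝ᵥ y) / (d i + z) - (us i ⬝ᵥ y) / (ds i + z)|
      ≤ (1 / (d i + z)) *
          ((∑ k ∈ Finset.univ.erase i, (2 * ‖ΔK‖ / |ds i - ds k|) * |us k ⬝ᵥ y|)
            + |us i ⬝ᵥ y| * (1 - Θi)
            + ‖ΔK‖ * |us i ⬝ᵥ y| / (ds i + z)) := by
  classical
  set a := u i ⬝ᵥ y with ha'
  set b := us i ⬝ᵥ y with hb'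
  -- positivity of eigenvalues
  have huii : u i ⬝ᵥ u i = 1 := by simpa using hu i i
  have husii : us i ⬝ᵥ us i = 1 := by simpa using hus i i
  have hd0 : 0 ≤ d i := by
    have h2 := hK.dotProduct_mulVec_nonneg (u i)
    rw [heig i] at h2
    simpa [dotProduct_smul, huii] using h2
  have hds0 : 0 ≤ ds i := by
    have h2 := hKs.dotProduct_mulVec_nonneg (us i)
    rw [heigs i] at h2
    simpa [dotProduct_smul, husii] using h2
  have hA : 0 < d i + z := by linarith
  have hB : 0 < ds i + z := by linarith
  -- expansion of a in the us basis
  set M : Matrix (Fin n) (Fin n) ℝ := Matrix.of fun k j => us k j with hM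
  have hMMt : M * Mᵀ = 1 := by
    ext p q
    have := hus p q
    simpa [Matrix.mul_apply, dotProduct, hM, Matrix.one_apply] using this
  have hMtM : Mᵀ * M = 1 := mul_eq_one_comm.mp hMMt
  have hexp : a = ∑ k, (u i ⬝ᵥ us k) * (us k ⬝ᵥ y) := by
    calc a = u i ⬝ᵥ Mᵀ.mulVec (M.mulVec y) := by
            rw [Matrix.mulVec_mulVec, hMtM, Matrix.one_mulVec]
      _ = Matrix.vecMul (u i) Mᵀ ⬝ᵥ M.mulVec y := Matrix.dotProduct_mulVec _ _ _
      _ = ∑ k, (u i ⬝ᵥ us k) * (us k ⬝ᵥ y) := by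
            simp [dotProduct, Matrix.vecMul, Matrix.mulVec, hM]
  have hsplit : a - b = (∑ k ∈ Finset.univ.erase i, (u i ⬝ᵥ us k) * (us k ⬝ᵥ y))
      + ((u i ⬝ᵥ us i) - 1) * b := by
    rw [hexp, ← Finset.add_sum_erase _ _ (Finset.mem_univ i)]
    ring
  -- Cauchy-Schwarz
  have hcs : (u i ⬝ᵥ us i) ^ 2 ≤ 1 := by
    have h := Finset.sum_mul_sq_le_sq_mul_sq Finset.univ (u i) (us i)
    have h1 : ∑ p, u i p ^ 2 = 1 := by simpa [dotProduct, sq] using hu i i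
    have h2 : ∑ p, us i p ^ 2 = 1 := by simpa [dotProduct, sq] using hus i i
    have h3 : u i ⬝ᵥ us i = ∑ p, u i p * us i p := rfl
    rw [h3]
    calc (∑ p, u i p * us i p) ^ 2 ≤ (∑ p, u i p ^ 2) * ∑ p, us i p ^ 2 := h
      _ = 1 := by rw [h1, h2]; ring
  have hui1 : u i ⬝ᵥ us i ≤ 1 := by nlinarith
  -- bound on |a - b|
  set S := ∑ k ∈ Finset.univ.erase i, (2 * ‖ΔK‖ / |ds i - ds k|) * |us k ⬝ᵥ y| with hS
  have habb : |a - b| ≤ S + |b| * (1 - Θi) := by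
    rw [hsplit]
    calc |(∑ k ∈ Finset.univ.erase i, (u i ⬝ᵥ us k) * (us k ⬝ᵥ y)) + ((u i ⬝ᵥ us i) - 1) * b|
        ≤ |∑ k ∈ Finset.univ.erase i, (u i ⬝ᵥ us k) * (us k ⬝ᵥ y)| + |((u i ⬝ᵥ us i) - 1) * b| :=
          abs_add_le _ _
      _ ≤ S + |b| * (1 - Θi) := by
          gcongr ?_ + ?_
          · calc |∑ k ∈ Finset.univ.erase i, (u i ⬝ᵥ us k) * (us k ⬝ᵥ y)|
                ≤ ∑ k ∈ Finset.univ.erase i, |(u i ⬝ᵥ us k) * (us k ⬝ᵥ y)| :=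
                  Finset.abs_sum_le_sum_abs _ _
              _ ≤ S := by
                  apply Finset.sum_le_sum
                  intro k hk
                  rw [abs_mul]
                  exact mul_le_mul_of_nonneg_right ((hc k (Finset.ne_of_mem_erase hk)).2)
                    (abs_nonneg _)
          · rw [abs_mul, mul_comm]
            apply mul_le_mul_of_nonneg_left _ (abs_nonneg b)
            rw [abs_sub_comm, abs_of_nonneg (by linarith)]
            linarith
  -- the key algebraic identity
  have hkey : a / (d i + z) - b / (ds i + z)
      = (a - b) / (d i + z) + b * (ds i - d i) / ((d i + z) * (ds i + z)) := by
    field_simp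
    ring
  have hfin : |a / (d i + z) - b / (ds i + z)|
      ≤ |a - b| / (d i + z) + |b| * ‖ΔK‖ / ((d i + z) * (ds i + z)) := by
    rw [hkey]
    calc |(a - b) / (d i + z) + b * (ds i - d i) / ((d i + z) * (ds i + z))|
        ≤ |(a - b) / (d i + z)| + |b * (ds i - d i) / ((d i + z) * (ds i + z))| := abs_add_le _ _
      _ ≤ |a - b| / (d i + z) + |b| * ‖ΔK‖ / ((d i + z) * (ds i + z)) := by
          rw [abs_div, abs_div, abs_mul, abs_of_pos hA, abs_mul, abs_of_pos hA, abs_of_pos hB]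
          gcongr
          rw [abs_sub_comm]
          exact ha
  calc |a / (d i + z) - b / (ds i + z)|
      ≤ |a - b| / (d i + z) + |b| * ‖ΔK‖ / ((d i + z) * (ds i + z)) := hfin
    _ ≤ (S + |b| * (1 - Θi)) / (d i + z) + |b| * ‖ΔK‖ / ((d i + z) * (ds i + z)) := by
        gcongr
    _ = (1 / (d i + z)) * (S + |b| * (1 - Θi) + ‖ΔK‖ * |b| / (ds i + z)) := by
        field_simp
end

section
/- (Finite-dimensional generalization bound, Theorem 1.) Let K* and K = K* + ΔK be n×n real symmetric positive semidefinite matrices with eigenvalues d_1*, …, d_n* (pairwise distinct) and d_1, …, d_n, and corresponding orthonormal eigenvectors u_1*, …, u_n* and u_1, …, u_n; let z > 0, y ∈ ℝⁿ, and k̂ ∈ ℝⁿ. Assume for every i: (a) |d_i − d_i*| ≤ ‖ΔK‖; (b) there is Θ_i ∈ [0, 1] with ⟨u_i, u_i*⟩ ≥ Θ_i; (c) for every k ≠ i, |⟨u_i, u_k*⟩| ≤ 2 ‖ΔK‖ / |d_i* − d_k*|. Let C := max of ‖k̂‖ and max_{1 ≤ i ≤ n} |⟨u_i, k̂⟩|/(d_i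 + z). Then the difference between the KRR prediction under K and the prediction under K*, evaluated on the test feature vector k̂, satisfies | ⟨k̂, (K + zI)⁻¹ y⟩ − ⟨k̂, (K* + zI)⁻¹ y⟩ | ≤ C · Σ_{i=1}^n ( Σ_{k ≠ i} (2 ‖ΔK‖ / |d_i* − d_k*|) |⟨u_k*, y⟩| + |⟨u_i*, y⟩| (1 − Θ_i) + |⟨u_i*, y⟩| (‖ΔK‖ + √(2 − 2 Θ_i)) / (d_i* + z) ). -/
open Matrix
open scoped Matrix.Norms.L2Operator

lemma krr_aux_mulVec_sum {n : ℕ} {ι : Type*} (s : Finset ι) (A : Matrix (Fin n) (Fin n) ℝ)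
    (f : ι → Fin n → ℝ) : A.mulVec (∑ i ∈ s, f i) = ∑ i ∈ s, A.mulVec (f i) := by
  ext j
  simp only [Matrix.mulVec, dotProduct, Finset.sum_apply, Finset.mul_sum]
  exact Finset.sum_comm

lemma krr_aux_dotProduct_sum {n : ℕ} {ι : Type*} (s : Finset ι) (v : Fin n → ℝ)
    (w : ι → Fin n → ℝ) : v ⬝ᵥ (∑ i ∈ s, w i) = ∑ i ∈ s, v ⬝ᵥ w i := by
  simp only [dotProduct, Finset.sum_apply, Finset.mul_sum]
  exact Finset.sum_comm

lemma krr_aux_cs {n : ℕ} (v w : Fin n → ℝ) : (v ⬝ᵥ w)^2 ≤ (v ⬝ᵥ v) * (w ⬝ᵥ w) := by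
  simpa only [dotProduct, pow_two] using Finset.sum_mul_sq_le_sq_mul_sq Finset.univ v w

lemma krr_aux_complete {n : ℕ} (u : Fin n → Fin n → ℝ)
    (hu : ∀ i j, u i ⬝ᵥ u j = if i = j then (1:ℝ) else 0) (v : Fin n → ℝ) :
    ∑ i, (u i ⬝ᵥ v) • u i = v := by
  set U : Matrix (Fin n) (Fin n) ℝ := Matrix.of u with hU
  have h1 : U * Uᵀ = 1 := by
    ext i j
    simpa [hU, Matrix.mul_apply, dotProduct, Matrix.one_apply] using hu i j
  have h2 : Uᵀ * U = 1 := mul_eq_one_comm.mp h1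
  have h3 : (Uᵀ * U).mulVec v = v := by rw [h2, Matrix.one_mulVec]
  funext j
  have := congrFun h3 j
  rw [← this]
  simp only [Matrix.mulVec, Matrix.mul_apply, dotProduct, Finset.sum_apply, Pi.smul_apply,
    smul_eq_mul, Finset.sum_mul, Finset.mul_sum]
  rw [Finset.sum_comm]
  exact Finset.sum_congr rfl fun k _ => Finset.sum_congr rfl fun i _ => by
    simp [hU]; ring

lemma krr_aux_eig_nonneg {n : ℕ} {M : Matrix (Fin n) (Fin n) ℝ} (hM : M.PosSemidef)
    {u : Fin n → ℝ} (hui : u ⬝ᵥ u = 1) {c : ℝ} (heig : M.mulVec u = c • u) : 0 ≤ c := by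
  have h := hM.dotProduct_mulVec_nonneg u
  rw [heig] at h
  simpa [dotProduct_smul, hui] using h

lemma krr_aux_spectral {n : ℕ} (M : Matrix (Fin n) (Fin n) ℝ) (hM : M.PosSemidef)
    (d : Fin n → ℝ) (u : Fin n → Fin n → ℝ)
    (hu : ∀ i j, u i ⬝ᵥ u j = if i = j then (1:ℝ) else 0)
    (heig : ∀ i, M.mulVec (u i) = d i • u i)
    (z : ℝ) (hz : 0 < z) (y khat : Fin n → ℝ) :
    khat ⬝ᵥ ((M + z • (1 : Matrix (Fin n) (Fin n) ℝ))⁻¹).mulVec y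
      = ∑ i, (u i ⬝ᵥ khat) * (u i ⬝ᵥ y) / (d i + z) := by
  have hd : ∀ i, 0 ≤ d i := fun i => krr_aux_eig_nonneg hM (by simp [hu i i]) (heig i)
  have hdz : ∀ i, 0 < d i + z := fun i => add_pos_of_nonneg_of_pos (hd i) hz
  have hpd : (M + z • (1 : Matrix (Fin n) (Fin n) ℝ)).PosDef := by
    refine Matrix.PosDef.of_dotProduct_mulVec_pos (hM.1.add ?_) fun x hx => ?_
    · unfold Matrix.IsHermitian
      ext i j
      simp [Matrix.one_apply, eq_comm]
    · rw [add_mulVec, dotProduct_add, smul_mulVec, one_mulVec, dotProduct_smul]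
      have h1 : (0:ℝ) < star x ⬝ᵥ x := dotProduct_star_self_pos_iff.mpr hx
      have h2 := hM.dotProduct_mulVec_nonneg x
      have : (0:ℝ) < z * (star x ⬝ᵥ x) := mul_pos hz h1
      simpa [smul_eq_mul] using add_pos_of_nonneg_of_pos h2 this
  have hdet : IsUnit (M + z • (1 : Matrix (Fin n) (Fin n) ℝ)).det :=
    isUnit_iff_ne_zero.mpr hpd.det_pos.ne'
  set x : Fin n → ℝ := ∑ i, ((u i ⬝ᵥ y) / (d i + z)) • u i with hx
  have h1 : (M + z • (1 : Matrix (Fin n) (Fin n) ℝ)).mulVec x = y := by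
    rw [hx]
    have : (M + z • (1 : Matrix (Fin n) (Fin n) ℝ)).mulVec (∑ i, ((u i ⬝ᵥ y) / (d i + z)) • u i)
        = ∑ i, ((u i ⬝ᵥ y) / (d i + z)) • ((M + z • (1 : Matrix (Fin n) (Fin n) ℝ)).mulVec (u i)) := by
      rw [krr_aux_mulVec_sum]
      exact Finset.sum_congr rfl fun i _ => by rw [Matrix.mulVec_smul]
    rw [this]
    have h2 : ∀ i, ((u i ⬝ᵥ y) / (d i + z)) • ((M + z • (1 : Matrix (Fin n) (Fin n) ℝ)).mulVec (u i))
        = (u i ⬝ᵥ y) • u i := by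
      intro i
      rw [add_mulVec, heig i, smul_mulVec, one_mulVec, ← add_smul, smul_smul,
        div_mul_cancel₀ _ (hdz i).ne']
    rw [Finset.sum_congr rfl fun i _ => h2 i, krr_aux_complete u hu y]
  have h2 : ((M + z • (1 : Matrix (Fin n) (Fin n) ℝ))⁻¹).mulVec y = x := by
    conv_lhs => rw [← h1]
    rw [Matrix.mulVec_mulVec, Matrix.nonsing_inv_mul _ hdet, Matrix.one_mulVec]
  rw [h2, hx, krr_aux_dotProduct_sum]
  exact Finset.sum_congr rfl fun i _ => by
    rw [dotProduct_smul, smul_eq_mul, dotProduct_comm khat (u i)]; ring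

/-- Finite-dimensional generalization bound, Theorem 1: Let `K*` and
`K = K* + ΔK` be `n × n` real symmetric positive semidefinite matrices with pairwise distinct
eigenvalues `ds i` (for `K*`) and eigenvalues `d i` (for `K`), with corresponding orthonormal
eigenvectors `us i` and `u i`; let `z > 0`, `y ∈ ℝⁿ`, `k̂ ∈ ℝⁿ`. Assume for every `i`:
(a) `|d i − ds i| ≤ ‖ΔK‖`; (b) there is `Θ i ∈ [0,1]` with `⟨u i, us i⟩ ≥ Θ i`;
(c) for every `k ≠ i`, `|⟨u i, us k⟩| ≤ 2 ‖ΔK‖ / |ds i − ds k|`. With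
`C := max (‖k̂‖, max_i |⟨u i, k̂⟩|/(d i + z))`, the difference between the KRR prediction
under `K` and under `K*` on the test feature vector `k̂` satisfies the bound of Theorem 1.
Here `‖ΔK‖` is the ℓ²→ℓ² operator norm and the Euclidean norm `‖k̂‖` is `√(k̂ ⬝ᵥ k̂)`. -/
theorem krr_generalization_bound
    (n : ℕ) (hn : 0 < n)
    (Ks ΔK : Matrix (Fin n) (Fin n) ℝ)
    (hKs : Ks.PosSemidef) (hK : (Ks + ΔK).PosSemidef)
    (ds d : Fin n → ℝ) (hdist : ∀ i k : Fin n, i ≠ k → ds i ≠ ds k)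
    (us u : Fin n → (Fin n → ℝ))
    (hus : ∀ i j, us i ⬝ᵥ us j = if i = j then (1 : ℝ) else 0)
    (hu : ∀ i j, u i ⬝ᵥ u j = if i = j then (1 : ℝ) else 0)
    (heigs : ∀ i, Ks.mulVec (us i) = ds i • us i)
    (heig : ∀ i, (Ks + ΔK).mulVec (u i) = d i • u i)
    (z : ℝ) (hz : 0 < z)
    (y khat : Fin n → ℝ)
    (ha : ∀ i, |d i - ds i| ≤ ‖ΔK‖)
    (Θ : Fin n → ℝ) (hΘ0 : ∀ i, 0 ≤ Θ i) (hΘ1 : ∀ i, Θ i ≤ 1)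
    (hΘ : ∀ i, u i ⬝ᵥ us i ≥ Θ i)
    (hc : ∀ i k : Fin n, k ≠ i → |u i ⬝ᵥ us k| ≤ 2 * ‖ΔK‖ / |ds i - ds k|)
    (C : ℝ)
    (hC : C = max (Real.sqrt (khat ⬝ᵥ khat))
        (Finset.univ.sup' (Finset.univ_nonempty_iff.mpr ⟨⟨0, hn⟩⟩)
          fun i => |u i ⬝ᵥ khat| / (d i + z))) :
    |khat ⬝ᵥ ((Ks + ΔK + z • (1 : Matrix (Fin n) (Fin n) ℝ))⁻¹).mulVec y
        - khat ⬝ᵥ ((Ks + z • (1 : Matrix (Fin n) (Fin n) ℝ))⁻¹).mulVec y|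
      ≤ C * ∑ i,
          ((∑ k ∈ Finset.univ.erase i, (2 * ‖ΔK‖ / |ds i - ds k|) * |us k ⬝ᵥ y|)
            + |us i ⬝ᵥ y| * (1 - Θ i)
            + |us i ⬝ᵥ y| * (‖ΔK‖ + Real.sqrt (2 - 2 * Θ i)) / (ds i + z)) := by
  have hd0 : ∀ i, 0 ≤ d i := fun i => krr_aux_eig_nonneg hK (by simp [hu i i]) (heig i)
  have hds0 : ∀ i, 0 ≤ ds i := fun i => krr_aux_eig_nonneg hKs (by simp [hus i i]) (heigs i)
  have hdz : ∀ i, 0 < d i + z := fun i => add_pos_of_nonneg_of_pos (hd0 i) hz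
  have hdsz : ∀ i, 0 < ds i + z := fun i => add_pos_of_nonneg_of_pos (hds0 i) hz
  have hCk : Real.sqrt (khat ⬝ᵥ khat) ≤ C := hC ▸ le_max_left _ _
  have hC0 : 0 ≤ C := (Real.sqrt_nonneg _).trans hCk
  have hpC : ∀ i, |u i ⬝ᵥ khat| / (d i + z) ≤ C := fun i =>
    hC ▸ le_trans (Finset.le_sup' (fun i => |u i ⬝ᵥ khat| / (d i + z)) (Finset.mem_univ i))
      (le_max_right _ _)
  have hΔ0 : (0:ℝ) ≤ ‖ΔK‖ := norm_nonneg _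
  have hkk0 : (0:ℝ) ≤ khat ⬝ᵥ khat := Finset.sum_nonneg fun k _ => mul_self_nonneg _
  rw [krr_aux_spectral (Ks + ΔK) hK d u hu heig z hz y khat,
    krr_aux_spectral Ks hKs ds us hus heigs z hz y khat,
    ← Finset.sum_sub_distrib]
  refine le_trans (Finset.abs_sum_le_sum_abs _ _) ?_
  rw [Finset.mul_sum]
  refine Finset.sum_le_sum fun i _ => ?_
  set a := u i ⬝ᵥ khat with hadef
  set b := us i ⬝ᵥ khat with hbdef
  set q := us i ⬝ᵥ y with hqdef
  set g := u i ⬝ᵥ us i with hgdef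
  have hp : |a / (d i + z)| ≤ C := by
    rw [abs_div, abs_of_pos (hdz i)]; exact hpC i
  have hp0 : 0 ≤ |a / (d i + z)| := abs_nonneg _
  -- expansion of u i ⬝ᵥ y
  have hy : u i ⬝ᵥ y = ∑ k, (us k ⬝ᵥ y) * (u i ⬝ᵥ us k) := by
    conv_lhs => rw [← krr_aux_complete us hus y]
    rw [krr_aux_dotProduct_sum]
    exact Finset.sum_congr rfl fun k _ => by rw [dotProduct_smul, smul_eq_mul]
  have hsplit : ∑ k, (us k ⬝ᵥ y) * (u i ⬝ᵥ us k)
      = (∑ k ∈ Finset.univ.erase i, (us k ⬝ᵥ y) * (u i ⬝ᵥ us k)) + q * g := by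
    rw [Finset.sum_erase_add Finset.univ _ (Finset.mem_univ i)]
  -- g bounds
  have hg2 : g ^ 2 ≤ 1 := by
    have h := krr_aux_cs (u i) (us i)
    rw [hu i i, hus i i] at h
    simpa using h
  have hg1 : g ≤ 1 := by nlinarith [hg2]
  have hgΘ : Θ i ≤ g := hΘ i
  -- |a - b| bound via Cauchy-Schwarz
  have hw : (u i - us i) ⬝ᵥ (u i - us i) = 2 - 2 * g := by
    rw [sub_dotProduct, dotProduct_sub, dotProduct_sub, hu i i, hus i i,
      dotProduct_comm (us i) (u i)]
    simp only [if_pos rfl, if_true]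
    ring
  have h2Θ : (0:ℝ) ≤ 2 - 2 * Θ i := by linarith [hΘ1 i]
  have habw : a - b = (u i - us i) ⬝ᵥ khat := by rw [sub_dotProduct]
  have hab : |a - b| ≤ Real.sqrt (2 - 2 * Θ i) * C := by
    have hcs : ((u i - us i) ⬝ᵥ khat) ^ 2 ≤ (2 - 2 * Θ i) * (khat ⬝ᵥ khat) := by
      refine le_trans (krr_aux_cs _ _) ?_
      rw [hw]
      exact mul_le_mul_of_nonneg_right (by linarith) hkk0
    rw [habw, ← Real.sqrt_sq_eq_abs]
    refine le_trans (Real.sqrt_le_sqrt hcs) ?_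
    rw [Real.sqrt_mul h2Θ]
    exact mul_le_mul_of_nonneg_left hCk (Real.sqrt_nonneg _)
  -- key algebraic identity
  have hkey : a * (u i ⬝ᵥ y) / (d i + z) - b * q / (ds i + z)
      = (a / (d i + z)) * (∑ k ∈ Finset.univ.erase i, (us k ⬝ᵥ y) * (u i ⬝ᵥ us k))
        + q * ((a / (d i + z)) * (g - 1))
        + q * ((a - b) / (ds i + z) + (a / (d i + z)) * (ds i - d i) / (ds i + z)) := by
    rw [hy, hsplit]
    have h1 := (hdz i).ne'
    have h2 := (hdsz i).ne'
    field_simp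
    ring
  rw [hkey]
  have h1 : |(a / (d i + z)) * (∑ k ∈ Finset.univ.erase i, (us k ⬝ᵥ y) * (u i ⬝ᵥ us k))|
      ≤ C * ∑ k ∈ Finset.univ.erase i, (2 * ‖ΔK‖ / |ds i - ds k|) * |us k ⬝ᵥ y| := by
    rw [abs_mul, Finset.mul_sum]
    refine le_trans (mul_le_mul hp (Finset.abs_sum_le_sum_abs _ _) (abs_nonneg _) hC0) ?_
    rw [Finset.mul_sum]
    refine Finset.sum_le_sum fun k hk => ?_
    have hk' : k ≠ i := (Finset.mem_erase.mp hk).1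
    rw [abs_mul]
    calc C * (|us k ⬝ᵥ y| * |u i ⬝ᵥ us k|)
        ≤ C * (|us k ⬝ᵥ y| * (2 * ‖ΔK‖ / |ds i - ds k|)) := by
          refine mul_le_mul_of_nonneg_left ?_ hC0
          exact mul_le_mul_of_nonneg_left (hc i k hk') (abs_nonneg _)
      _ = C * ((2 * ‖ΔK‖ / |ds i - ds k|) * |us k ⬝ᵥ y|) := by ring
  have h2 : |q * ((a / (d i + z)) * (g - 1))| ≤ C * (|q| * (1 - Θ i)) := by
    rw [abs_mul, abs_mul]
    have hgabs : |g - 1| ≤ 1 - Θ i := by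
      rw [abs_of_nonpos (by linarith)]
      linarith
    calc |q| * (|a / (d i + z)| * |g - 1|) ≤ |q| * (C * (1 - Θ i)) := by
          refine mul_le_mul_of_nonneg_left ?_ (abs_nonneg _)
          exact mul_le_mul hp hgabs (abs_nonneg _) hC0
      _ = C * (|q| * (1 - Θ i)) := by ring
  have h3 : |q * ((a - b) / (ds i + z) + (a / (d i + z)) * (ds i - d i) / (ds i + z))|
      ≤ C * (|q| * (‖ΔK‖ + Real.sqrt (2 - 2 * Θ i)) / (ds i + z)) := by
    rw [abs_mul]
    have hinner : |(a - b) / (ds i + z) + (a / (d i + z)) * (ds i - d i) / (ds i + z)|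
        ≤ (Real.sqrt (2 - 2 * Θ i) * C + C * ‖ΔK‖) / (ds i + z) := by
      have hnum : |a - b| + |(a / (d i + z)) * (ds i - d i)|
          ≤ Real.sqrt (2 - 2 * Θ i) * C + C * ‖ΔK‖ := by
        refine add_le_add hab ?_
        rw [abs_mul]
        refine mul_le_mul hp ?_ (abs_nonneg _) hC0
        rw [abs_sub_comm]; exact ha i
      rw [← add_div, abs_div, abs_of_pos (hdsz i)]
      exact (div_le_div_iff_of_pos_right (hdsz i)).mpr (le_trans (abs_add_le _ _) hnum)
    calc |q| * |(a - b) / (ds i + z) + (a / (d i + z)) * (ds i - d i) / (ds i + z)|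
        ≤ |q| * ((Real.sqrt (2 - 2 * Θ i) * C + C * ‖ΔK‖) / (ds i + z)) :=
          mul_le_mul_of_nonneg_left hinner (abs_nonneg _)
      _ = C * (|q| * (‖ΔK‖ + Real.sqrt (2 - 2 * Θ i)) / (ds i + z)) := by ring
  calc |(a / (d i + z)) * (∑ k ∈ Finset.univ.erase i, (us k ⬝ᵥ y) * (u i ⬝ᵥ us k))
        + q * ((a / (d i + z)) * (g - 1))
        + q * ((a - b) / (ds i + z) + (a / (d i + z)) * (ds i - d i) / (ds i + z))|
      ≤ |(a / (d i + z)) * (∑ k ∈ Finset.univ.erase i, (us k ⬝ᵥ y) * (u i ⬝ᵥ us k))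
          + q * ((a / (d i + z)) * (g - 1))|
        + |q * ((a - b) / (ds i + z) + (a / (d i + z)) * (ds i - d i) / (ds i + z))| :=
        abs_add_le _ _
    _ ≤ |(a / (d i + z)) * (∑ k ∈ Finset.univ.erase i, (us k ⬝ᵥ y) * (u i ⬝ᵥ us k))|
        + |q * ((a / (d i + z)) * (g - 1))|
        + |q * ((a - b) / (ds i + z) + (a / (d i + z)) * (ds i - d i) / (ds i + z))| := by
        exact add_le_add_left (abs_add_le _ _) _
    _ ≤ (C * ∑ k ∈ Finset.univ.erase i, (2 * ‖ΔK‖ / |ds i - ds k|) * |us k ⬝ᵥ y|)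
        + C * (|q| * (1 - Θ i))
        + C * (|q| * (‖ΔK‖ + Real.sqrt (2 - 2 * Θ i)) / (ds i + z)) := by
        exact add_le_add (add_le_add h1 h2) h3
    _ = C * ((∑ k ∈ Finset.univ.erase i, (2 * ‖ΔK‖ / |ds i - ds k|) * |us k ⬝ᵥ y|)
        + |q| * (1 - Θ i)
        + |q| * (‖ΔK‖ + Real.sqrt (2 - 2 * Θ i)) / (ds i + z)) := by ring
end
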